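/- Fix reals c and λ, and let X, Y, Z be reals with X+c > 0, Y+c > 0, Z+c > 0, X ≠ Y and X ≠ Z. Define G₂(U|V) := 4λ²/(√(U+c)·√(V+c)·(√(U+c)+√(V+c))²) and, for U ≠ V, H(U,V|S) := 16λ²·(∂/∂V)[(G₂(U|S)−G₂(V|S))/(U−V)]. Then H(X,Y|Z) + H(X,Z|Y) + 2·G₂(X|Y)·G₂(X|Z) = 32λ⁴/((X+c)·(Y+c)^{3/2}·(Z+c)^{3/2}). -/

import Mathlib

/-!
In the variables `a = √(X+c)`, `b = √(Y+c)`, `d = √(Z+c)` the two-point function is the rational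
function `4λ²/(u v (u+v)²)`, and by the chain rule (`dV = 2b db`) its `V`-derivative is rational
as well. The divided-difference derivatives defining `H` are then explicit rational functions of
`a, b, d`, and the claimed factorisation becomes an identity of rational functions.
-/

/-- `G₂(U|V) = twoPoint λ √(U+c) √(V+c)`. -/
noncomputable def twoPoint (lam u v : ℝ) : ℝ := 4 * lam ^ 2 / (u * v * (u + v) ^ 2)

lemma hasDerivAt_twoPoint_left {lam u v : ℝ} (hu : 0 < u) (hv : 0 < v) :
    HasDerivAt (fun u => twoPoint lam u v)
      (-4 * lam ^ 2 * (3 * u + v) / (u ^ 2 * v * (u + v) ^ 3)) u := by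
  have hden : HasDerivAt (fun u => u * v * (u + v) ^ 2) (v * (u + v) * (3 * u + v)) u :=
    (((hasDerivAt_id u).mul_const v).mul (((hasDerivAt_id u).add_const v).pow 2)).congr_deriv
      (by simp only [id, Pi.pow_apply]; ring)
  refine ((hasDerivAt_const u (4 * lam ^ 2)).div hden (by positivity)).congr_deriv ?_
  field_simp
  ring

lemma hasDerivAt_twoPoint_sqrt_left {lam c y v : ℝ} (hy : 0 < y + c) (hv : 0 < v) :
    HasDerivAt (fun y => twoPoint lam √(y + c) v)
      (-2 * lam ^ 2 * (3 * √(y + c) + v) / (√(y + c) ^ 3 * v * (√(y + c) + v) ^ 3)) y := by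
  have hs : HasDerivAt (fun y => √(y + c)) (1 / (2 * √(y + c))) y :=
    ((Real.hasDerivAt_sqrt hy.ne').comp y ((hasDerivAt_id y).add_const c)).congr_deriv
      (by simp)
  have hb := Real.sqrt_pos.2 hy
  refine ((hasDerivAt_twoPoint_left (lam := lam) hb hv).comp y hs).congr_deriv ?_
  field_simp
  ring

lemma hasDerivAt_dividedDifference {f : ℝ → ℝ} {f' x y : ℝ} (hf : HasDerivAt f f' y)
    (hxy : x ≠ y) :
    HasDerivAt (fun v => (f x - f v) / (x - v)) ((f x - f y - f' * (x - y)) / (x - y) ^ 2) y :=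
  ((hf.const_sub (f x)).div ((hasDerivAt_id y).const_sub x) (sub_ne_zero.2 hxy)).congr_deriv
    (by simp only [id]; ring)

lemma twoPoint_identity {lam a b d : ℝ} (ha : 0 < a) (hb : 0 < b) (hd : 0 < d)
    (hab : a ≠ b) (had : a ≠ d) :
    16 * lam ^ 2 * ((twoPoint lam a d - twoPoint lam b d
        - -2 * lam ^ 2 * (3 * b + d) / (b ^ 3 * d * (b + d) ^ 3) * (a ^ 2 - b ^ 2))
          / (a ^ 2 - b ^ 2) ^ 2)
      + 16 * lam ^ 2 * ((twoPoint lam a b - twoPoint lam d b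
        - -2 * lam ^ 2 * (3 * d + b) / (d ^ 3 * b * (d + b) ^ 3) * (a ^ 2 - d ^ 2))
          / (a ^ 2 - d ^ 2) ^ 2)
      + 2 * twoPoint lam a b * twoPoint lam a d
      = 32 * lam ^ 4 / (a ^ 2 * b ^ 3 * d ^ 3) := by
  have hab' : a ^ 2 - b ^ 2 ≠ 0 := by
    rw [sq_sub_sq]; exact mul_ne_zero (by positivity) (sub_ne_zero.2 hab)
  have had' : a ^ 2 - d ^ 2 ≠ 0 := by
    rw [sq_sub_sq]; exact mul_ne_zero (by positivity) (sub_ne_zero.2 had)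
  unfold twoPoint
  field_simp
  ring

theorem stmt_8 (c lam X Y Z : ℝ) (hX : 0 < X + c) (hY : 0 < Y + c) (hZ : 0 < Z + c)
    (hXY : X ≠ Y) (hXZ : X ≠ Z)
    (G₂ : ℝ → ℝ → ℝ)
    (hG₂ : ∀ U V, G₂ U V = 4 * lam ^ 2 /
      (Real.sqrt (U + c) * Real.sqrt (V + c) * (Real.sqrt (U + c) + Real.sqrt (V + c)) ^ 2))
    (H : ℝ → ℝ → ℝ → ℝ)
    (hH : ∀ U V S, U ≠ V →
      H U V S = 16 * lam ^ 2 * deriv (fun V' => (G₂ U S - G₂ V' S) / (U - V')) V) :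
    H X Y Z + H X Z Y + 2 * G₂ X Y * G₂ X Z =
      32 * lam ^ 4 / ((X + c) * Real.sqrt (Y + c) ^ 3 * Real.sqrt (Z + c) ^ 3) := by
  have hG : G₂ = fun U V => twoPoint lam √(U + c) √(V + c) := funext₂ hG₂
  have hsq : ∀ {U}, 0 < U + c → √(U + c) ^ 2 = U + c := fun hU => Real.sq_sqrt hU.le
  have hsub : ∀ {V}, 0 < V + c → X - V = √(X + c) ^ 2 - √(V + c) ^ 2 := fun hV => by
    rw [hsq hX, hsq hV, add_sub_add_right_eq_sub]
  have hinj : ∀ {V}, 0 < V + c → X ≠ V → √(X + c) ≠ √(V + c) := fun hV hXV h =>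
    hXV (add_right_cancel ((Real.sqrt_inj hX.le hV.le).1 h))
  have hH' : ∀ {V S}, 0 < V + c → 0 < S + c → X ≠ V → H X V S = 16 * lam ^ 2 *
      ((G₂ X S - G₂ V S - -2 * lam ^ 2 * (3 * √(V + c) + √(S + c)) /
        (√(V + c) ^ 3 * √(S + c) * (√(V + c) + √(S + c)) ^ 3) * (X - V)) / (X - V) ^ 2) := by
    intro V S hV hS hXV
    rw [hH X V S hXV, hG]
    exact congrArg _ (hasDerivAt_dividedDifference
      (hasDerivAt_twoPoint_sqrt_left hV (Real.sqrt_pos.2 hS)) hXV).deriv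
  rw [hH' hY hZ hXY, hH' hZ hY hXZ, hsub hY, hsub hZ, hG]
  conv_rhs => rw [← hsq hX]
  exact twoPoint_identity (Real.sqrt_pos.2 hX) (Real.sqrt_pos.2 hY) (Real.sqrt_pos.2 hZ)
    (hinj hY hXY) (hinj hZ hXZ)
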